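/- Let a, e be integers with 1 < e < a and r = 2^e − 1. For any integer z with v₂(z) = u ≥ 1, the geometric sum satisfies [2z; r] ≡ 2^e·z (mod 2^{e+u+1}). -/

import Mathlib

/-!
Pairing consecutive terms gives `[2n; x] = (1 + x) [n; x²]`. For `r = 2^e - 1` this reads
`[2z; r] = 2^e [z; r²]`, so it suffices that `[n; q] ≡ n (mod 2^(u+1))` whenever `q ≡ 1 (mod 4)` and
`2^u ∣ n`. That follows by induction on `u`, applying the same pairing identity to `q`, whose square
is again `≡ 1 (mod 4)`: from `[m; q²] ≡ m (mod 2^(u+1))` and `1 + q ≡ 2 (mod 4)` one gets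
`[2m; q] = (1 + q) [m; q²] ≡ 2m (mod 2^(u+2))`.
-/

open Finset

theorem geom_sum_two_mul {R : Type*} [CommSemiring R] (x : R) (n : ℕ) :
    ∑ i ∈ range (2 * n), x ^ i = (1 + x) * ∑ i ∈ range n, (x ^ 2) ^ i := by
  induction n with
  | zero => simp
  | succ n ih =>
    rw [Nat.mul_succ, sum_range_succ, sum_range_succ, ih, sum_range_succ]
    ring

theorem Int.sq_modEq_one_of_odd {x : ℤ} (hx : Odd x) : x ^ 2 ≡ 1 [ZMOD 4] :=
  Int.sq_mod_four_eq_one_of_odd hx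

theorem Int.geom_sum_modEq_of_pow_dvd {q : ℤ} (hq : q ≡ 1 [ZMOD 4]) {u n : ℕ} (hn : 2 ^ u ∣ n) :
    ∑ i ∈ Finset.range n, q ^ i ≡ n [ZMOD 2 ^ (u + 1)] := by
  induction u generalizing q n with
  | zero =>
    have hq2 : q ≡ 1 [ZMOD 2] := hq.of_mul_left 2
    calc ∑ i ∈ Finset.range n, q ^ i ≡ ∑ i ∈ Finset.range n, 1 ^ i [ZMOD 2] :=
          Int.ModEq.sum fun i _ => hq2.pow i
      _ = n := by simp
  | succ u ih =>
    obtain ⟨m, rfl⟩ : 2 ∣ n := (dvd_pow_self 2 u.succ_ne_zero).trans hn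
    have hm : 2 ^ u ∣ m := Nat.dvd_of_mul_dvd_mul_left two_pos (by rwa [← pow_succ'])
    have hm' : (2 : ℤ) ^ u ∣ m := by exact_mod_cast hm
    have hhalf : 2 ^ (u + 1) ∣ (m : ℤ) - ∑ i ∈ Finset.range m, (q ^ 2) ^ i :=
      (ih (by simpa using hq.pow 2) hm).dvd
    have hq4 : 2 ^ 2 ∣ q - 1 := hq.symm.dvd
    have hq2 : 2 ∣ 1 + q := by
      obtain ⟨k, hk⟩ := hq4
      exact ⟨2 * k + 1, by linarith⟩
    rw [geom_sum_two_mul, Int.modEq_iff_dvd]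
    calc (2 : ℤ) ^ (u + 1 + 1)
          ∣ (1 + q) * (m - ∑ i ∈ Finset.range m, (q ^ 2) ^ i) - (q - 1) * m := by
          refine dvd_sub ?_ ?_
          · rw [pow_succ, mul_comm]
            exact mul_dvd_mul hq2 hhalf
          · rw [show u + 1 + 1 = 2 + u by ring, pow_add]
            exact mul_dvd_mul hq4 hm'
      _ = ((2 * m : ℕ) : ℤ) - (1 + q) * ∑ i ∈ Finset.range m, (q ^ 2) ^ i := by push_cast; ring

theorem typeII_geom_sum_congr_general (e : ℕ) (he : 1 < e) (z u : ℕ)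
    (hval : emultiplicity 2 (z : ℤ) = (u : ℕ∞)) :
    (∑ i ∈ Finset.range (2 * z), ((2 : ℤ) ^ e - 1) ^ i)
      ≡ 2 ^ e * (z : ℤ) [ZMOD 2 ^ (e + u + 1)] := by
  have hr : Odd ((2 : ℤ) ^ e - 1) := (Int.even_pow.2 ⟨even_two, by omega⟩).sub_odd odd_one
  have hz : 2 ^ u ∣ z := by exact_mod_cast pow_dvd_of_le_emultiplicity hval.ge
  have hsum := Int.geom_sum_modEq_of_pow_dvd (Int.sq_modEq_one_of_odd hr) hz
  rw [geom_sum_two_mul, add_sub_cancel, add_assoc, pow_add]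
  exact hsum.mul_left'

/-- For `1 < e < a`, `r = 2^e - 1` and any `z` with `v₂(z) = u ≥ 1`:
`[2z; r] = 1 + r + ⋯ + r^(2z-1) ≡ 2^e * z (mod 2^(e+u+1))`. -/
theorem typeII_geom_sum_congr (a e : ℕ) (he : 1 < e) (hea : e < a) (z u : ℕ) (hu : 1 ≤ u)
    (hval : emultiplicity 2 (z : ℤ) = (u : ℕ∞)) :
    (∑ i ∈ Finset.range (2 * z), ((2 : ℤ) ^ e - 1) ^ i)
      ≡ 2 ^ e * (z : ℤ) [ZMOD 2 ^ (e + u + 1)] :=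
  typeII_geom_sum_congr_general e he z u hval
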